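/- Upper bound on the smoothed class probability at a perturbed input (case ψ ≤ ψ̃): Let x, x̃ ∈ X, let z★ be a longest common subsequence of x and x̃ with L := |z★|, let ψ, ψ̃ ∈ (0,1) with ψ ≤ ψ̃, let f̄ : X → Y be any base classifier and y ∈ Y. Set μ := p_y(x; f̄, ψ) and let H★ := min{ H ∈ {0,…,L} : Σ_{i=0}^{H} B(L, ψ, i) ≥ μ } (this set is nonempty since Σ_{i=0}^{L} B(L, ψ, i) = 1 ≥ μ). Then p_y(x̃; f̄, ψ̃) ≤ (ψ̃^{|x̃|−L} / ψ^{|x|−L}) · ( Σ_{i=0}^{H★−1} B(L, ψ̃, i) + B(L, ψ̃, H★) · ⌈ (μ − Σ_{j=0}^{H★−1} B(L, ψ, j)) / B(L, ψ, H★) ⌉_{C(L,H★)^{−1}} ) + 1 − ψ̃^{|x̃|−L}. -/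

import Mathlib

/-!
Extending a deletion indicator of the common subsequence `z★` by zeros on the positions of `x`
outside `z★` multiplies its probability by `ψ ^ (|x| - L)` and does not change the retained
subsequence; likewise for `x̃`. Hence the indicators of `z★` accepted by `f̄` have `ψ`-mass at most
`μ / ψ ^ (|x| - L)`, while `p_y(x̃)` is at most `ψ̃ ^ (|x̃| - L)` times their `ψ̃`-mass plus the
mass `1 - ψ̃ ^ (|x̃| - L)` of all non-extended indicators. The `ψ̃`-mass of a set of indicators
with given `ψ`-mass is then bounded as in the Neyman–Pearson lemma: the likelihood ratio of an
indicator depends only on its number `k` of retained tokens and decreases in `k` when `ψ ≤ ψ̃`,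
so the extremal set contains all indicators with `k < H` and part of those with `k = H`.
-/

/-- Apply a deletion indicator: keep the tokens at positions `i` with `ε i = true`, in order. -/
def applyDel {Ω : Type*} (x : List Ω) (ε : Fin x.length → Bool) : List Ω :=
  (List.finRange x.length).filterMap fun i => if ε i then some (x.get i) else none

/-- Number of retained tokens `|ε|`. -/
def retained {n : ℕ} (ε : Fin n → Bool) : ℕ :=
  (Finset.univ.filter fun i => ε i = true).card

/-- `q_ψ(ε|x) = ψ^{|x|-|ε|} (1-ψ)^{|ε|}`. -/
noncomputable def qdel {Ω : Type*} (ψ : ℝ) (x : List Ω) (ε : Fin x.length → Bool) : ℝ :=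
  ψ ^ (x.length - retained ε) * (1 - ψ) ^ (retained ε)

/-- The score `s_{f̄,ψ}(ε, x) = q_ψ(ε|x)·1[f̄(apply(x,ε)) = y]`. -/
noncomputable def score {Ω Y : Type*} [DecidableEq Y] (f : List Ω → Y) (y : Y) (ψ : ℝ)
    (x : List Ω) (ε : Fin x.length → Bool) : ℝ :=
  qdel ψ x ε * (if f (applyDel x ε) = y then 1 else 0)

/-- The smoothed class probability `p_y(x; f̄, ψ) = Σ_{ε ∈ E(x)} s_{f̄,ψ}(ε, x)`. -/
noncomputable def smoothedProb {Ω Y : Type*} [DecidableEq Y] (f : List Ω → Y) (y : Y)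
    (ψ : ℝ) (x : List Ω) : ℝ :=
  ∑ ε : Fin x.length → Bool, score f y ψ x ε

/-- `z` is a longest common subsequence of `x` and `x̃`. -/
def IsLCS {Ω : Type*} (z x xt : List Ω) : Prop :=
  z.Sublist x ∧ z.Sublist xt ∧ ∀ w : List Ω, w.Sublist x → w.Sublist xt → w.length ≤ z.length

/-- The binomial pmf `B(n, p, k) = C(n,k)·(1−p)^k·p^{n−k}`. -/
noncomputable def binomPMF (n : ℕ) (p : ℝ) (k : ℕ) : ℝ :=
  (n.choose k : ℝ) * (1 - p) ^ k * p ^ (n - k)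

/-- Gridded floor `⌊a⌋_v = v·⌊a/v⌋`. -/
noncomputable def gfloor (a v : ℝ) : ℝ := v * (⌊a / v⌋ : ℤ)

/-- Gridded ceiling `⌈a⌉_v = v·⌈a/v⌉`. -/
noncomputable def gceil (a v : ℝ) : ℝ := v * (⌈a / v⌉ : ℤ)

open Finset

section Indicators

lemma retained_le {n : ℕ} (ε : Fin n → Bool) : retained ε ≤ n :=
  (card_filter_le _ _).trans_eq (card_fin n)

lemma card_filter_retained_eq (n k : ℕ) :
    #{δ : Fin n → Bool | retained δ = k} = n.choose k := by
  rw [← card_fin n, ← card_powersetCard k (univ : Finset (Fin n)), card_fin]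
  refine card_nbij' (fun δ => univ.filter (δ · = true)) (fun s i => decide (i ∈ s))
    ?_ ?_ ?_ ?_
  · intro δ hδ
    simp only [coe_filter, mem_univ, true_and] at hδ
    simpa [mem_powersetCard, retained] using hδ
  · intro s hs
    simp only [mem_coe, mem_powersetCard] at hs
    rw [mem_coe, mem_filter]
    refine ⟨mem_univ _, ?_⟩
    simpa [retained] using hs.2
  · intro δ _
    funext i
    simp
  · intro s _
    ext i
    simp

lemma qdel_nonneg {Ω : Type*} {ψ : ℝ} (h0 : 0 ≤ ψ) (h1 : ψ ≤ 1) (x : List Ω)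
    (ε : Fin x.length → Bool) : 0 ≤ qdel ψ x ε :=
  mul_nonneg (pow_nonneg h0 _) (pow_nonneg (sub_nonneg.mpr h1) _)

variable {Ω Y : Type*} [DecidableEq Y] (f : List Ω → Y) (y : Y)

lemma score_nonneg {ψ : ℝ} (h0 : 0 ≤ ψ) (h1 : ψ ≤ 1) (x : List Ω) (ε : Fin x.length → Bool) :
    0 ≤ score f y ψ x ε :=
  mul_nonneg (qdel_nonneg h0 h1 x ε) (by split_ifs <;> norm_num)

lemma score_le_qdel {ψ : ℝ} (h0 : 0 ≤ ψ) (h1 : ψ ≤ 1) (x : List Ω) (ε : Fin x.length → Bool) :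
    score f y ψ x ε ≤ qdel ψ x ε := by
  have := qdel_nonneg h0 h1 x ε
  unfold score
  split_ifs <;> simp [this]

lemma smoothedProb_eq_sum_filter (ψ : ℝ) (x : List Ω) :
    smoothedProb f y ψ x = ∑ ε with f (applyDel x ε) = y, qdel ψ x ε := by
  simp only [smoothedProb, score, mul_ite, mul_one, mul_zero, sum_ite, sum_const_zero, add_zero]

end Indicators

section Levels

noncomputable def levelWeight (n : ℕ) (p : ℝ) (k : ℕ) : ℝ := p ^ (n - k) * (1 - p) ^ k

lemma qdel_eq_levelWeight {Ω : Type*} (ψ : ℝ) (x : List Ω) (ε : Fin x.length → Bool) :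
    qdel ψ x ε = levelWeight x.length ψ (retained ε) := rfl

lemma binomPMF_eq_choose_mul_levelWeight (n : ℕ) (p : ℝ) (k : ℕ) :
    binomPMF n p k = n.choose k * levelWeight n p k := by
  rw [binomPMF, levelWeight]
  ring

lemma levelWeight_pos {n : ℕ} {p : ℝ} (h0 : 0 < p) (h1 : p < 1) (k : ℕ) :
    0 < levelWeight n p k :=
  mul_pos (pow_pos h0 _) (pow_pos (sub_pos.mpr h1) _)

lemma binomPMF_nonneg {n : ℕ} {p : ℝ} (h0 : 0 ≤ p) (h1 : p ≤ 1) (k : ℕ) : 0 ≤ binomPMF n p k := by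
  have := sub_nonneg.mpr h1
  unfold binomPMF
  positivity

lemma sum_binomPMF_eq_one (n : ℕ) (p : ℝ) : ∑ k ∈ range (n + 1), binomPMF n p k = 1 := by
  have h := add_pow (1 - p) p n
  rw [sub_add_cancel, one_pow] at h
  rw [h]
  exact sum_congr rfl fun k _ => by rw [binomPMF]; ring

lemma sum_levelWeight_retained {n : ℕ} (p : ℝ) (S : Finset (Fin n → Bool)) :
    ∑ δ ∈ S, levelWeight n p (retained δ)
      = ∑ k ∈ range (n + 1), #{δ ∈ S | retained δ = k} * levelWeight n p k := by
  rw [← sum_fiberwise_of_maps_to (g := retained) (t := range (n + 1))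
    fun δ _ => mem_range.mpr (Nat.lt_succ_of_le (retained_le δ))]
  refine sum_congr rfl fun k _ => ?_
  rw [sum_congr rfl fun δ hδ => by rw [(mem_filter.mp hδ).2], sum_const, nsmul_eq_mul]

lemma sum_qdel_eq_one {Ω : Type*} (p : ℝ) (x : List Ω) : ∑ ε, qdel p x ε = 1 := by
  simp only [qdel_eq_levelWeight, sum_levelWeight_retained, card_filter_retained_eq,
    ← binomPMF_eq_choose_mul_levelWeight, sum_binomPMF_eq_one]

lemma smoothedProb_le_one {Ω Y : Type*} [DecidableEq Y] (f : List Ω → Y) (y : Y) {ψ : ℝ}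
    (h0 : 0 ≤ ψ) (h1 : ψ ≤ 1) (x : List Ω) : smoothedProb f y ψ x ≤ 1 :=
  (sum_le_sum fun ε _ => score_le_qdel f y h0 h1 x ε).trans_eq (sum_qdel_eq_one ψ x)

end Levels

section Extension

def extendDel {m n : ℕ} (e : Fin m ↪o Fin n) (δ : Fin m → Bool) : Fin n → Bool :=
  fun i => decide (∃ j, δ j = true ∧ e j = i)

variable {m n : ℕ} (e : Fin m ↪o Fin n)

@[simp]
lemma extendDel_apply_self (δ : Fin m → Bool) (j : Fin m) : extendDel e δ (e j) = δ j := by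
  simp [extendDel]

lemma extendDel_injective : Function.Injective (extendDel e) := fun δ δ' h =>
  funext fun j => by simpa using congrFun h (e j)

lemma retained_extendDel (δ : Fin m → Bool) : retained (extendDel e δ) = retained δ := by
  have : univ.filter (extendDel e δ · = true) = (univ.filter (δ · = true)).map e.toEmbedding := by
    ext i
    simp [extendDel]
  rw [retained, retained, this, card_map]

lemma applyDel_eq_map {Ω : Type*} (x : List Ω) (ε : Fin x.length → Bool) :
    applyDel x ε = ((List.finRange x.length).filter fun i => ε i).map x.get := by
  simp [applyDel, ← List.filterMap_filter]

lemma applyDel_extendDel {Ω : Type*} {z x : List Ω} (e : Fin z.length ↪o Fin x.length)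
    (he : ∀ j, z.get j = x.get (e j)) (δ : Fin z.length → Bool) :
    applyDel x (extendDel e δ) = applyDel z δ := by
  have hpos : (List.finRange x.length).filter (extendDel e δ ·)
      = ((List.finRange z.length).filter (δ ·)).map e := by
    refine List.Perm.eq_of_sortedLE ?_ ?_ ?_
    · exact List.sortedLE_iff_pairwise.mpr
        (((List.pairwise_lt_finRange _).sublist List.filter_sublist).imp le_of_lt)
    · refine List.sortedLE_iff_pairwise.mpr ?_
      exact ((List.pairwise_lt_finRange _).sublist List.filter_sublist).map e
        fun a b (h : a < b) => (e.lt_iff_lt.mpr h).le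
    · rw [List.perm_ext_iff_of_nodup ((List.nodup_finRange _).filter _)
        (((List.nodup_finRange _).filter _).map e.injective)]
      intro i
      simp [extendDel]
  rw [applyDel_eq_map, applyDel_eq_map, hpos, List.map_map]
  exact List.map_congr_left fun j _ => (he j).symm

end Extension

section Sublist

variable {Ω Y : Type*} [DecidableEq Y] (f : List Ω → Y) (y : Y) {ψ : ℝ} {z x : List Ω}

lemma qdel_extendDel (e : Fin z.length ↪o Fin x.length) (δ : Fin z.length → Bool) :
    qdel ψ x (extendDel e δ) = ψ ^ (x.length - z.length) * qdel ψ z δ := by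
  have hzx : z.length ≤ x.length := by simpa using Fintype.card_le_of_embedding e.toEmbedding
  have hδ := retained_le δ
  rw [qdel, qdel, retained_extendDel, ← mul_assoc, ← pow_add]
  congr 2
  omega

lemma score_extendDel (e : Fin z.length ↪o Fin x.length) (he : ∀ j, z.get j = x.get (e j))
    (δ : Fin z.length → Bool) :
    score f y ψ x (extendDel e δ) = ψ ^ (x.length - z.length) * score f y ψ z δ := by
  rw [score, score, qdel_extendDel, applyDel_extendDel e he, mul_assoc]

lemma pow_mul_smoothedProb_le_of_sublist (h0 : 0 ≤ ψ) (h1 : ψ ≤ 1) (h : z.Sublist x) :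
    ψ ^ (x.length - z.length) * smoothedProb f y ψ z ≤ smoothedProb f y ψ x := by
  obtain ⟨e, he⟩ := List.sublist_iff_exists_fin_orderEmbedding_get_eq.mp h
  calc ψ ^ (x.length - z.length) * smoothedProb f y ψ z
      = ∑ ε ∈ univ.image (extendDel e), score f y ψ x ε := by
        rw [sum_image (extendDel_injective e).injOn, smoothedProb, mul_sum]
        exact sum_congr rfl fun δ _ => (score_extendDel f y e he δ).symm
    _ ≤ smoothedProb f y ψ x :=
        sum_le_sum_of_subset_of_nonneg (subset_univ _) fun ε _ _ => score_nonneg f y h0 h1 x ε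

/-- Indicators of `x` that are not extensions from `z` contribute at most their total mass
`1 - ψ ^ (|x| - |z|)`. -/
lemma smoothedProb_le_of_sublist (h0 : 0 ≤ ψ) (h1 : ψ ≤ 1) (h : z.Sublist x) :
    smoothedProb f y ψ x
      ≤ ψ ^ (x.length - z.length) * smoothedProb f y ψ z + (1 - ψ ^ (x.length - z.length)) := by
  obtain ⟨e, he⟩ := List.sublist_iff_exists_fin_orderEmbedding_get_eq.mp h
  set T := univ.image (extendDel e)
  have hinj : Set.InjOn (extendDel e) ↑(univ : Finset (Fin z.length → Bool)) :=
    (extendDel_injective e).injOn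
  have hscore : ∑ ε ∈ T, score f y ψ x ε = ψ ^ (x.length - z.length) * smoothedProb f y ψ z := by
    rw [sum_image hinj, smoothedProb, mul_sum]
    exact sum_congr rfl fun δ _ => score_extendDel f y e he δ
  have hmass : ∑ ε ∈ T, qdel ψ x ε = ψ ^ (x.length - z.length) := by
    rw [sum_image hinj, ← mul_one (ψ ^ _), ← sum_qdel_eq_one ψ z, mul_sum]
    exact sum_congr rfl fun δ _ => qdel_extendDel e δ
  have hrest : ∑ ε ∈ univ \ T, score f y ψ x ε ≤ 1 - ψ ^ (x.length - z.length) := by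
    rw [← sum_qdel_eq_one ψ x, ← hmass, ← sum_sdiff_eq_sub (subset_univ T)]
    exact sum_le_sum fun ε _ => score_le_qdel f y h0 h1 x ε
  rw [smoothedProb, ← sum_sdiff (subset_univ T), hscore]
  linarith

end Sublist

section NeymanPearson

variable {n : ℕ} {p pt : ℝ}

/-- The likelihood ratio `levelWeight n pt k / levelWeight n p k` is antitone in `k`: each
additional retained token multiplies it by `(1 - pt) p / ((1 - p) pt) ≤ 1`. -/
lemma levelWeight_mul_le_mul (h0 : 0 ≤ p) (hle : p ≤ pt) (hpt : pt ≤ 1) {j k : ℕ}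
    (hjk : j ≤ k) (hk : k ≤ n) :
    levelWeight n pt k * levelWeight n p j ≤ levelWeight n p k * levelWeight n pt j := by
  obtain ⟨d, rfl⟩ := Nat.exists_eq_add_of_le hjk
  have hsplit : n - j = (n - (j + d)) + d := by omega
  have hstep : ((1 - pt) * p) ^ d ≤ ((1 - p) * pt) ^ d :=
    pow_le_pow_left₀ (mul_nonneg (sub_nonneg.mpr hpt) h0) (by nlinarith) d
  have hcommon : 0 ≤ (pt * p) ^ (n - (j + d)) * ((1 - pt) * (1 - p)) ^ j := by
    have := sub_nonneg.mpr hpt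
    have := sub_nonneg.mpr (hle.trans hpt)
    have := h0.trans hle
    positivity
  calc levelWeight n pt (j + d) * levelWeight n p j
      = (pt * p) ^ (n - (j + d)) * ((1 - pt) * (1 - p)) ^ j * ((1 - pt) * p) ^ d := by
        simp only [levelWeight, hsplit, mul_pow, pow_add]; ring
    _ ≤ (pt * p) ^ (n - (j + d)) * ((1 - pt) * (1 - p)) ^ j * ((1 - p) * pt) ^ d :=
        mul_le_mul_of_nonneg_left hstep hcommon
    _ = levelWeight n p (j + d) * levelWeight n pt j := by
        simp only [levelWeight, hsplit, mul_pow, pow_add]; ring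

lemma ratio_mul_levelWeight_le (h0 : 0 < p) (h1 : p < 1) (hle : p ≤ pt) (hpt : pt ≤ 1)
    {k H : ℕ} (hkH : k ≤ H) (hH : H ≤ n) :
    levelWeight n pt H / levelWeight n p H * levelWeight n p k ≤ levelWeight n pt k := by
  rw [div_mul_eq_mul_div, div_le_iff₀ (levelWeight_pos h0 h1 H), mul_comm (levelWeight n pt k)]
  exact levelWeight_mul_le_mul h0.le hle hpt hkH hH

lemma levelWeight_le_ratio_mul (h0 : 0 < p) (h1 : p < 1) (hle : p ≤ pt) (hpt : pt ≤ 1)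
    {k H : ℕ} (hHk : H ≤ k) (hk : k ≤ n) :
    levelWeight n pt k ≤ levelWeight n pt H / levelWeight n p H * levelWeight n p k := by
  rw [div_mul_eq_mul_div, le_div_iff₀ (levelWeight_pos h0 h1 H), mul_comm (levelWeight n pt H)]
  exact levelWeight_mul_le_mul h0.le hle hpt hHk hk

lemma binomPMF_div_binomPMF {H : ℕ} (hH : H ≤ n) :
    binomPMF n pt H / binomPMF n p H = levelWeight n pt H / levelWeight n p H := by
  rw [binomPMF_eq_choose_mul_levelWeight, binomPMF_eq_choose_mul_levelWeight,
    mul_div_mul_left _ _ (Nat.cast_ne_zero.mpr (Nat.choose_pos hH).ne')]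

lemma ratio_mul_sum_binomPMF_le (h0 : 0 < p) (h1 : p < 1) (hle : p ≤ pt) (hpt : pt ≤ 1)
    {H : ℕ} (hH : H ≤ n) :
    binomPMF n pt H / binomPMF n p H * ∑ i ∈ range H, binomPMF n p i
      ≤ ∑ i ∈ range H, binomPMF n pt i := by
  rw [mul_sum]
  refine sum_le_sum fun i hi => ?_
  rw [binomPMF_div_binomPMF hH, binomPMF_eq_choose_mul_levelWeight n p,
    binomPMF_eq_choose_mul_levelWeight n pt, mul_left_comm]
  exact mul_le_mul_of_nonneg_left
    (ratio_mul_levelWeight_le h0 h1 hle hpt (mem_range.mp hi).le hH) (Nat.cast_nonneg _)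

/-- `c k` stands for the number of members of a set of indicators that retain `k` tokens. -/
lemma sum_mul_levelWeight_le (h0 : 0 < p) (h1 : p < 1) (hle : p ≤ pt) (hpt : pt ≤ 1)
    {H : ℕ} (hH : H ≤ n) (c : ℕ → ℝ) (hc0 : ∀ k, 0 ≤ c k) (hc : ∀ k, c k ≤ n.choose k) :
    ∑ k ∈ range (n + 1), c k * levelWeight n pt k
      ≤ ∑ i ∈ range H, binomPMF n pt i + binomPMF n pt H / binomPMF n p H *
          (∑ k ∈ range (n + 1), c k * levelWeight n p k - ∑ i ∈ range H, binomPMF n p i) := by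
  rw [binomPMF_div_binomPMF hH]
  set r := levelWeight n pt H / levelWeight n p H
  set d : ℕ → ℝ := fun k => levelWeight n pt k - r * levelWeight n p k
  have hterm : ∀ k ∈ range (n + 1), c k * d k ≤ if k < H then n.choose k * d k else 0 := by
    intro k hk
    split_ifs with hkH
    · exact mul_le_mul_of_nonneg_right (hc k)
        (sub_nonneg.mpr (ratio_mul_levelWeight_le h0 h1 hle hpt hkH.le hH))
    · exact mul_nonpos_of_nonneg_of_nonpos (hc0 k) (sub_nonpos.mpr
        (levelWeight_le_ratio_mul h0 h1 hle hpt (not_lt.mp hkH) (mem_range_succ_iff.mp hk)))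
  have hlow : ∑ k ∈ range (n + 1), (if k < H then n.choose k * d k else 0)
      = ∑ i ∈ range H, binomPMF n pt i - r * ∑ i ∈ range H, binomPMF n p i := by
    have hlevels : (range (n + 1)).filter (· < H) = range H := by
      ext k
      simp only [mem_filter, mem_range]
      omega
    rw [← sum_filter, hlevels, mul_sum, ← sum_sub_distrib]
    exact sum_congr rfl fun k _ => by simp only [d, binomPMF_eq_choose_mul_levelWeight]; ring
  have hsplit : ∑ k ∈ range (n + 1), c k * levelWeight n pt k
      = ∑ k ∈ range (n + 1), c k * d k + r * ∑ k ∈ range (n + 1), c k * levelWeight n p k := by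
    rw [mul_sum, ← sum_add_distrib]
    exact sum_congr rfl fun k _ => by ring
  linarith [sum_le_sum hterm]

lemma smoothedProb_le_neymanPearson {Ω Y : Type*} [DecidableEq Y] (f : List Ω → Y) (y : Y)
    (z : List Ω) (h0 : 0 < p) (h1 : p < 1) (hle : p ≤ pt) (hpt : pt ≤ 1)
    {H : ℕ} (hH : H ≤ z.length) :
    smoothedProb f y pt z
      ≤ ∑ i ∈ range H, binomPMF z.length pt i + binomPMF z.length pt H / binomPMF z.length p H *
          (smoothedProb f y p z - ∑ i ∈ range H, binomPMF z.length p i) := by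
  simp only [smoothedProb_eq_sum_filter, qdel_eq_levelWeight, sum_levelWeight_retained]
  refine sum_mul_levelWeight_le h0 h1 hle hpt hH _ (fun k => Nat.cast_nonneg _) fun k => ?_
  rw [← card_filter_retained_eq]
  exact_mod_cast card_le_card (filter_subset_filter _ (subset_univ _))

end NeymanPearson

lemma le_gceil (a : ℝ) {v : ℝ} (hv : 0 < v) : a ≤ gceil a v := by
  rw [gceil, ← div_le_iff₀' hv]
  exact Int.le_ceil _

lemma binomPMF_eq_zero_of_lt {n k : ℕ} (p : ℝ) (h : n < k) : binomPMF n p k = 0 := by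
  simp [binomPMF, Nat.choose_eq_zero_of_lt h]

lemma sum_range_binomPMF_of_lt {n H : ℕ} (p : ℝ) (h : n < H) :
    ∑ i ∈ range H, binomPMF n p i = 1 := by
  rw [← sum_subset (range_subset_range.mpr h) fun i _ hi => binomPMF_eq_zero_of_lt p ?_,
    sum_binomPMF_eq_one]
  simpa using hi

theorem stmt13_general {Ω Y : Type*} [DecidableEq Y] (x xt zs : List Ω)
    (hz : IsLCS zs x xt) (L : ℕ) (hL : L = zs.length)
    (ψ ψt : ℝ) (hψ : ψ ∈ Set.Ioo (0 : ℝ) 1) (hψt : ψt ∈ Set.Ioo (0 : ℝ) 1)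
    (hle : ψ ≤ ψt)
    (f : List Ω → Y) (y : Y)
    (μ : ℝ) (hμ : μ = smoothedProb f y ψ x)
    (H : ℕ) :
    smoothedProb f y ψt xt ≤
      ψt ^ (xt.length - L) / ψ ^ (x.length - L) *
        (∑ i ∈ Finset.range H, binomPMF L ψt i +
          binomPMF L ψt H *
            gceil ((μ - ∑ j ∈ Finset.range H, binomPMF L ψ j) / binomPMF L ψ H)
              ((L.choose H : ℝ)⁻¹)) +
      1 - ψt ^ (xt.length - L) := by
  subst hL hμ
  obtain ⟨hzx, hzxt, -⟩ := hz
  obtain ⟨hψ0, hψ1⟩ := hψ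
  obtain ⟨hψt0, hψt1⟩ := hψt
  set a := x.length - zs.length
  set b := xt.length - zs.length
  have hpa : 0 < ψ ^ a := pow_pos hψ0 a
  have hpa1 : ψ ^ a ≤ 1 := pow_le_one₀ hψ0.le hψ1.le
  have hpb : 0 ≤ ψt ^ b := pow_nonneg hψt0.le b
  have hxt := smoothedProb_le_of_sublist f y hψt0.le hψt1.le hzxt
  rcases le_or_gt H zs.length with hH | hH
  · set A := ∑ i ∈ range H, binomPMF zs.length ψt i
    set P := ∑ i ∈ range H, binomPMF zs.length ψ i
    set r := binomPMF zs.length ψt H / binomPMF zs.length ψ H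
    set G := gceil ((smoothedProb f y ψ x - P) / binomPMF zs.length ψ H) (zs.length.choose H)⁻¹
    have hx := pow_mul_smoothedProb_le_of_sublist f y hψ0.le hψ1.le hzx
    have hNP := smoothedProb_le_neymanPearson f y zs hψ0 hψ1 hle hψt1.le hH
    have hrP := ratio_mul_sum_binomPMF_le hψ0 hψ1 hle hψt1.le hH
    have hr0 : 0 ≤ r :=
      div_nonneg (binomPMF_nonneg hψt0.le hψt1.le H) (binomPMF_nonneg hψ0.le hψ1.le H)
    have hG : r * (smoothedProb f y ψ x - P) ≤ binomPMF zs.length ψt H * G := by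
      rw [div_mul_eq_mul_div, mul_div_assoc]
      exact mul_le_mul_of_nonneg_left
        (le_gceil _ (inv_pos.mpr (Nat.cast_pos.mpr (Nat.choose_pos hH))))
        (binomPMF_nonneg hψt0.le hψt1.le H)
    -- `ψ ^ a ≤ 1` may be dropped in front of `A - r * P ≥ 0`.
    have hpz : ψ ^ a * smoothedProb f y ψt zs ≤ A + binomPMF zs.length ψt H * G := by
      nlinarith [mul_le_mul_of_nonneg_left hNP hpa.le, mul_le_mul_of_nonneg_left hx hr0,
        mul_nonneg (sub_nonneg.mpr hpa1) (sub_nonneg.mpr hrP)]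
    calc smoothedProb f y ψt xt
        ≤ ψt ^ b / ψ ^ a * (ψ ^ a * smoothedProb f y ψt zs) + (1 - ψt ^ b) := by
          rwa [← mul_assoc, div_mul_cancel₀ _ hpa.ne']
      _ ≤ ψt ^ b / ψ ^ a * (A + binomPMF zs.length ψt H * G) + (1 - ψt ^ b) := by grw [hpz]
      _ = _ := by ring
  · -- For `H > L` the right-hand side is at least `1`.
    rw [sum_range_binomPMF_of_lt ψt hH, binomPMF_eq_zero_of_lt ψt hH, zero_mul, add_zero, mul_one]
    linarith [smoothedProb_le_one f y hψt0.le hψt1.le xt, le_div_self hpb hpa hpa1]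

/-- upper bound on the smoothed class probability at a perturbed input,
case `ψ ≤ ψ̃`. -/
theorem stmt13 {Ω Y : Type*} [DecidableEq Y] (x xt zs : List Ω)
    (hz : IsLCS zs x xt) (L : ℕ) (hL : L = zs.length)
    (ψ ψt : ℝ) (hψ : ψ ∈ Set.Ioo (0 : ℝ) 1) (hψt : ψt ∈ Set.Ioo (0 : ℝ) 1)
    (hle : ψ ≤ ψt)
    (f : List Ω → Y) (y : Y)
    (μ : ℝ) (hμ : μ = smoothedProb f y ψ x)
    (H : ℕ)
    (hH : H = sInf {h | h ≤ L ∧ μ ≤ ∑ i ∈ Finset.range (h + 1), binomPMF L ψ i}) :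
    smoothedProb f y ψt xt ≤
      ψt ^ (xt.length - L) / ψ ^ (x.length - L) *
        (∑ i ∈ Finset.range H, binomPMF L ψt i +
          binomPMF L ψt H *
            gceil ((μ - ∑ j ∈ Finset.range H, binomPMF L ψ j) / binomPMF L ψ H)
              ((L.choose H : ℝ)⁻¹)) +
      1 - ψt ^ (xt.length - L) :=
  stmt13_general x xt zs hz L hL ψ ψt hψ hψt hle f y μ hμ H
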